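/- arXiv:1210.6088 — 5 statements merged into one kernel-verified Lean document; each statement's English description precedes it below -/
import Mathlib

section
/- Let G be a finite digraph and L(G) its line digraph. Then, as an identity of integers, ν(L(G)) = ν(G) + Σ_v (indeg_G(v) − 1)·(outdeg_G(v) − 1), the sum running over all vertices v of G. -/
universe u

/-- The line digraph of a digraph `G`: vertices are the edges of `G`. -/
def lineDigraph {V : Type u} (G : Digraph V) : Digraph {e : V × V // G.Adj e.1 e.2} where
  Adj e f := e.1.2 = f.1.1

instance {V : Type u} (G : Digraph V) [Fintype V] [DecidableRel G.Adj] :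
    Fintype {e : V × V // G.Adj e.1 e.2} :=
  Subtype.fintype _

instance {V : Type u} (G : Digraph V) [DecidableEq V] :
    DecidableRel (lineDigraph G).Adj :=
  fun e f => inferInstanceAs (Decidable (e.1.2 = f.1.1))

/-- The finset of (directed) edges of `G`. -/
def edgeFinset {V : Type u} (G : Digraph V) [Fintype V] [DecidableRel G.Adj] :
    Finset (V × V) :=
  Finset.univ.filter (fun p => G.Adj p.1 p.2)

/-- The indegree of a vertex. -/
def indeg {V : Type u} (G : Digraph V) [Fintype V] [DecidableRel G.Adj] (v : V) : ℕ :=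
  (Finset.univ.filter (fun u => G.Adj u v)).card

/-- The outdegree of a vertex. -/
def outdeg {V : Type u} (G : Digraph V) [Fintype V] [DecidableRel G.Adj] (v : V) : ℕ :=
  (Finset.univ.filter (fun w => G.Adj v w)).card

/-- The cyclomatic number `ν(G) = |E| - |V| + 1`, as an integer. -/
def cyclomatic {V : Type u} (G : Digraph V) [Fintype V] [DecidableRel G.Adj] : ℤ :=
  ((edgeFinset G).card : ℤ) - (Fintype.card V : ℤ) + 1

/-- A directed walk of length `k` in `G`. -/
def IsWalk {V : Type u} (G : Digraph V) {k : ℕ} (w : Fin (k + 1) → V) : Prop :=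
  ∀ i : Fin k, G.Adj (w i.castSucc) (w i.succ)

instance {V : Type u} (G : Digraph V) [DecidableRel G.Adj] {k : ℕ} :
    DecidablePred (IsWalk G (k := k)) :=
  fun w => inferInstanceAs (Decidable (∀ i : Fin k, G.Adj (w i.castSucc) (w i.succ)))

/-- A bundled finite digraph. -/
structure FinDigraph where
  V : Type
  [fin : Fintype V]
  [deq : DecidableEq V]
  G : Digraph V
  [dec : DecidableRel G.Adj]

attribute [instance] FinDigraph.fin FinDigraph.deq FinDigraph.dec

/-- One straight-converting step: the bundled line digraph. -/
def FinDigraph.line (H : FinDigraph) : FinDigraph where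
  V := {e : H.V × H.V // H.G.Adj e.1 e.2}
  G := lineDigraph H.G

/-- The `j`-fold iterated line digraph. -/
def FinDigraph.iterLine (H : FinDigraph) : ℕ → FinDigraph
  | 0 => H
  | j + 1 => (H.iterLine j).line

/-- Canonical: every vertex simple. -/
def FinDigraph.Canonical (H : FinDigraph) : Prop :=
  ∀ v : H.V, indeg H.G v ≤ 1 ∨ outdeg H.G v ≤ 1

/-- Contains a complicated vertex. -/
def FinDigraph.HasComplicated (H : FinDigraph) : Prop :=
  ∃ v : H.V, 2 ≤ indeg H.G v ∧ 2 ≤ outdeg H.G v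

/-- An `l₃₁`-interval of length `ℓ`. -/
def IsL31 {V : Type u} (G : Digraph V) [Fintype V] [DecidableRel G.Adj] {ℓ : ℕ}
    (w : Fin (ℓ + 1) → V) : Prop :=
  IsWalk G w ∧ 2 ≤ indeg G (w 0) ∧ 2 ≤ outdeg G (w (Fin.last ℓ)) ∧
    ∀ i : Fin (ℓ + 1), 0 < (i : ℕ) → (i : ℕ) < ℓ →
      indeg G (w i) = 1 ∧ outdeg G (w i) = 1

/-- A directed cycle of length `k`. -/
def IsCycle {V : Type u} (G : Digraph V) {k : ℕ} (w : Fin (k + 1) → V) : Prop :=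
  IsWalk G w ∧ w 0 = w (Fin.last k) ∧
    ∀ i j : Fin (k + 1), (i : ℕ) < k → (j : ℕ) < k → w i = w j → i = j

/-- `G` has a contour: a directed cycle with both an entry edge and an exit edge. -/
def HasContour {V : Type u} (G : Digraph V) : Prop :=
  ∃ (k : ℕ) (w : Fin (k + 2) → V), IsCycle G (k := k + 1) w ∧
    (∃ a b : V, G.Adj a b ∧ (∃ i, w i = b) ∧
      ¬ ∃ i : Fin (k + 1), w i.castSucc = a ∧ w i.succ = b) ∧
    (∃ a b : V, G.Adj a b ∧ (∃ i, w i = a) ∧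
      ¬ ∃ i : Fin (k + 1), w i.castSucc = a ∧ w i.succ = b)


section Aux
variable {V : Type u} [Fintype V] [DecidableEq V] (G : Digraph V) [DecidableRel G.Adj]

lemma edgeFinset_card_eq_sum_outdeg : (edgeFinset G).card = ∑ v : V, outdeg G v := by
  classical
  simp only [edgeFinset, Finset.card_filter, Fintype.sum_prod_type, outdeg, Finset.card_filter]

lemma edgeFinset_card_eq_sum_indeg : (edgeFinset G).card = ∑ v : V, indeg G v := by
  classical
  simp only [edgeFinset, Finset.card_filter, Fintype.sum_prod_type_right, indeg,
    Finset.card_filter]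

lemma card_subtype_edge : Fintype.card {e : V × V // G.Adj e.1 e.2} = (edgeFinset G).card := by
  classical
  simp [edgeFinset, Fintype.card_subtype]

lemma line_edge_card :
    (edgeFinset (lineDigraph G)).card = ∑ v : V, indeg G v * outdeg G v := by
  classical
  have hsub : ∀ (f : V × V → ℕ),
      ∑ e : {e : V × V // G.Adj e.1 e.2}, f e.1 = ∑ p ∈ edgeFinset G, f p := by
    intro f
    rw [edgeFinset]
    exact (Finset.sum_subtype _ (by simp) f).symm
  have h1 : (edgeFinset (lineDigraph G)).card
      = ∑ e : {e : V × V // G.Adj e.1 e.2}, outdeg G e.1.2 := by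
    simp only [edgeFinset, Finset.card_filter, Fintype.sum_prod_type]
    refine Finset.sum_congr rfl fun e _ => ?_
    have : ∀ f : {e : V × V // G.Adj e.1 e.2},
        (if (lineDigraph G).Adj e f then 1 else 0) = if e.1.2 = f.1.1 then 1 else 0 := by
      intro f; rfl
    simp only [this]
    rw [hsub (fun p => if e.1.2 = p.1 then 1 else 0)]
    rw [outdeg, Finset.card_filter, edgeFinset]
    rw [Finset.sum_filter, Fintype.sum_prod_type, Finset.sum_comm]
    refine Finset.sum_congr rfl fun b _ => ?_
    trans (∑ a : V, if e.1.2 = a then (if G.Adj a b then 1 else 0) else 0)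
    · refine Finset.sum_congr rfl fun a _ => ?_
      by_cases h1 : G.Adj a b <;> by_cases h2 : (e : V × V).2 = a <;> simp [h1, h2]
    · simp
  rw [h1, hsub (fun p => outdeg G p.2)]
  rw [edgeFinset, Finset.sum_filter, Fintype.sum_prod_type_right]
  refine Finset.sum_congr rfl fun v _ => ?_
  rw [indeg, Finset.card_filter, Finset.sum_mul]
  refine Finset.sum_congr rfl fun a _ => ?_
  by_cases h : G.Adj a v <;> simp [h]

end Aux

/-- `ν(L(G)) = ν(G) + ∑ v, (indeg v - 1) * (outdeg v - 1)` in `ℤ`. -/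
theorem cyclomatic_line_digraph {V : Type u} [Fintype V] [DecidableEq V]
    (G : Digraph V) [DecidableRel G.Adj] :
    cyclomatic (lineDigraph G) =
      cyclomatic G +
        ∑ v : V, ((indeg G v : ℤ) - 1) * ((outdeg G v : ℤ) - 1) := by
  classical
  have h1 := card_subtype_edge G
  have h2 := edgeFinset_card_eq_sum_outdeg G
  have h2' := edgeFinset_card_eq_sum_indeg G
  have h3 := line_edge_card G
  unfold cyclomatic
  rw [h1, h3, h2]
  push_cast [h2, h2']
  have key : ∑ v : V, ((indeg G v : ℤ) - 1) * ((outdeg G v : ℤ) - 1)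
      = ∑ v : V, ((indeg G v : ℤ) * outdeg G v) - ∑ v : V, (indeg G v : ℤ)
        - ∑ v : V, (outdeg G v : ℤ) + (Fintype.card V : ℤ) := by
    rw [← Finset.sum_sub_distrib, ← Finset.sum_sub_distrib,
      Fintype.card_eq_sum_ones, Nat.cast_sum, ← Finset.sum_add_distrib]
    exact Finset.sum_congr rfl fun v _ => by push_cast; ring
  rw [key]
  have hio : ∑ v : V, (indeg G v : ℤ) = ∑ v : V, (outdeg G v : ℤ) := by
    rw [← Nat.cast_sum, ← Nat.cast_sum, ← h2, ← h2']
  rw [hio]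
  push_cast
  ring
end

section
/- Theorem 9 (linear growth for canonical converting): let G be a finite digraph and j a natural number such that for every i < j every vertex of L^i(G) has indegree ≥ 1, outdegree ≥ 1, and is simple. Then, in ℤ, |V(L^j(G))| = |V(G)| + j·(ν(G) − 1); i.e., the number of vertices of the iterated line digraphs depends linearly on the number of converting steps, with slope determined by the structure of the initial graph alone. -/
universe u

/-
In the line digraph, vertices are the edges of `G` and edges are the pairs (in-edge, out-edge) at a
vertex of `G`, so `|V(L G)| = |E(G)|` and `|E(L G)| = ∑ indeg·outdeg`. With the handshake
identities `∑ indeg = ∑ outdeg = |E(G)|` this gives `ν(L G) = ν(G) + ∑ (indeg - 1)(outdeg - 1)`.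
Each summand vanishes at a simple vertex with both degrees positive, so under the hypothesis the
cyclomatic number is invariant along the iteration and every step adds `ν(G) - 1` vertices.
-/

theorem sub_one_mul_sub_one_eq_zero {a b : ℕ} (ha : 1 ≤ a) (hb : 1 ≤ b) (hab : a ≤ 1 ∨ b ≤ 1) :
    ((a : ℤ) - 1) * ((b : ℤ) - 1) = 0 := by
  rcases hab with hab | hab
  · simp [le_antisymm hab ha]
  · simp [le_antisymm hab hb]

section Degrees

variable {V : Type u} (G : Digraph V) [Fintype V] [DecidableRel G.Adj]

theorem card_edgeFinset_eq_card_subtype :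
    (edgeFinset G).card = Fintype.card {e : V × V // G.Adj e.1 e.2} :=
  (Fintype.card_subtype _).symm

theorem sum_outdeg_eq_card_edgeFinset : ∑ v, outdeg G v = (edgeFinset G).card := by
  rw [card_edgeFinset_eq_card_subtype, Fintype.card_congr
    (Equiv.subtypeProdEquivSigmaSubtype fun a b => G.Adj a b), Fintype.card_sigma]
  exact Finset.sum_congr rfl fun v _ => (Fintype.card_subtype _).symm

theorem sum_indeg_eq_card_edgeFinset : ∑ v, indeg G v = (edgeFinset G).card := by
  have swap : {e : V × V // G.Adj e.1 e.2} ≃ {e : V × V // G.Adj e.2 e.1} :=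
    (Equiv.prodComm V V).subtypeEquiv fun _ => Iff.rfl
  rw [card_edgeFinset_eq_card_subtype, Fintype.card_congr
    (swap.trans (Equiv.subtypeProdEquivSigmaSubtype fun a b => G.Adj b a)), Fintype.card_sigma]
  exact Finset.sum_congr rfl fun v _ => (Fintype.card_subtype _).symm

variable [DecidableEq V]

/-- An edge `(u, v) → (v, w)` of `L(G)` is a pair of an in-edge and an out-edge at `v`. -/
def lineDigraphEdgeEquiv :
    {q : {e : V × V // G.Adj e.1 e.2} × {e : V × V // G.Adj e.1 e.2} //
        (lineDigraph G).Adj q.1 q.2} ≃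
      Σ v : V, {u : V // G.Adj u v} × {w : V // G.Adj v w} where
  toFun q := ⟨q.1.1.1.2, ⟨q.1.1.1.1, q.1.1.2⟩, ⟨q.1.2.1.2, (congrArg (G.Adj · _) q.2).mpr q.1.2.2⟩⟩
  invFun s := ⟨(⟨(s.2.1.1, s.1), s.2.1.2⟩, ⟨(s.1, s.2.2.1), s.2.2.2⟩), rfl⟩
  left_inv := by
    rintro ⟨⟨⟨⟨a, b⟩, hab⟩, ⟨⟨c, d⟩, hcd⟩⟩, hbc : b = c⟩
    subst hbc
    rfl
  right_inv _ := rfl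

theorem card_edgeFinset_lineDigraph :
    (edgeFinset (lineDigraph G)).card = ∑ v, indeg G v * outdeg G v := by
  rw [card_edgeFinset_eq_card_subtype, Fintype.card_congr (lineDigraphEdgeEquiv G),
    Fintype.card_sigma]
  refine Finset.sum_congr rfl fun v _ => ?_
  rw [Fintype.card_prod, Fintype.card_subtype, Fintype.card_subtype]
  rfl

theorem cyclomatic_lineDigraph :
    cyclomatic (lineDigraph G) =
      cyclomatic G + ∑ v, ((indeg G v : ℤ) - 1) * ((outdeg G v : ℤ) - 1) := by
  have hin := congrArg (Nat.cast : ℕ → ℤ) (sum_indeg_eq_card_edgeFinset G)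
  have hout := congrArg (Nat.cast : ℕ → ℤ) (sum_outdeg_eq_card_edgeFinset G)
  push_cast at hin hout
  simp only [cyclomatic, card_edgeFinset_lineDigraph, ← card_edgeFinset_eq_card_subtype,
    sub_one_mul, mul_sub_one, Finset.sum_sub_distrib, Finset.sum_const, Finset.card_univ,
    nsmul_eq_mul, mul_one]
  push_cast
  linarith

end Degrees

namespace FinDigraph

theorem card_line (H : FinDigraph) :
    (Fintype.card H.line.V : ℤ) = Fintype.card H.V + (cyclomatic H.G - 1) := by
  rw [show Fintype.card H.line.V = (edgeFinset H.G).card from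
    (card_edgeFinset_eq_card_subtype H.G).symm, cyclomatic]
  ring

theorem cyclomatic_line (H : FinDigraph)
    (hH : ∀ v : H.V, ((indeg H.G v : ℤ) - 1) * ((outdeg H.G v : ℤ) - 1) = 0) :
    cyclomatic H.line.G = cyclomatic H.G := by
  rw [FinDigraph.line, cyclomatic_lineDigraph, Finset.sum_eq_zero fun v _ => hH v, add_zero]

theorem cyclomatic_iterLine (H : FinDigraph) (j : ℕ)
    (h : ∀ i < j, ∀ v : (H.iterLine i).V,
      ((indeg (H.iterLine i).G v : ℤ) - 1) * ((outdeg (H.iterLine i).G v : ℤ) - 1) = 0) :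
    cyclomatic (H.iterLine j).G = cyclomatic H.G := by
  induction j with
  | zero => rfl
  | succ j ih =>
    rw [iterLine, cyclomatic_line _ (h j j.lt_succ_self),
      ih fun i hi => h i (Nat.lt_succ_of_lt hi)]

theorem card_iterLine (H : FinDigraph) (j : ℕ)
    (h : ∀ i < j, ∀ v : (H.iterLine i).V,
      ((indeg (H.iterLine i).G v : ℤ) - 1) * ((outdeg (H.iterLine i).G v : ℤ) - 1) = 0) :
    (Fintype.card (H.iterLine j).V : ℤ) =
      Fintype.card H.V + (j : ℤ) * (cyclomatic H.G - 1) := by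
  induction j with
  | zero => simp only [CharP.cast_eq_zero, zero_mul, add_zero]; rfl
  | succ j ih =>
    have h' : ∀ i < j, _ := fun i hi => h i (Nat.lt_succ_of_lt hi)
    rw [iterLine, card_line, cyclomatic_iterLine H j h', ih h']
    push_cast
    ring

end FinDigraph

/-- Theorem 9: if for every `i < j` every vertex of `L^i(G)` has
indegree ≥ 1, outdegree ≥ 1 and is simple, then
`|V(L^j(G))| = |V(G)| + j * (ν(G) - 1)` in `ℤ`. -/
theorem iterLine_card_linear (H : FinDigraph) (j : ℕ)
    (h : ∀ i < j, ∀ v : (H.iterLine i).V,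
      1 ≤ indeg (H.iterLine i).G v ∧ 1 ≤ outdeg (H.iterLine i).G v ∧
        (indeg (H.iterLine i).G v ≤ 1 ∨ outdeg (H.iterLine i).G v ≤ 1)) :
    (Fintype.card (H.iterLine j).V : ℤ) =
      (Fintype.card H.V : ℤ) + (j : ℤ) * (cyclomatic H.G - 1) :=
  FinDigraph.card_iterLine H j fun i hi v =>
    sub_one_mul_sub_one_eq_zero (h i hi v).1 (h i hi v).2.1 (h i hi v).2.2
end

section
/- Shrinking of l₃₁-intervals under converting: if a finite digraph G contains an l₃₁-interval of length ℓ ≥ 2, then its line digraph L(G) contains an l₃₁-interval of length ℓ − 1. -/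
universe u

/-!
In `L(G)` the edge `(a, b)` has the in-neighbours `(x, a)` and the out-neighbours `(b, y)`, so its
indegree is that of `a` and its outdegree that of `b`. Hence the consecutive edges
`(w i, w (i+1))` of an `l₃₁`-interval `w` of length `ℓ ≥ 2` form an `l₃₁`-interval of length
`ℓ - 1` in `L(G)`: the first edge inherits the convergent start `w 0`, the last one the divergent
end `w ℓ`, and every other edge joins two elementary interior vertices.
-/

section LineDigraph

variable {V : Type u} [Fintype V] [DecidableEq V] (G : Digraph V) [DecidableRel G.Adj]

theorem indeg_lineDigraph (f : {e : V × V // G.Adj e.1 e.2}) :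
    indeg (lineDigraph G) f = indeg G f.1.1 := by
  unfold indeg
  refine Finset.card_bij (fun e _ => e.1.1) (fun e he => ?_) (fun e₁ he₁ e₂ he₂ h => ?_)
    (fun x hx => ?_) <;> simp only [Finset.mem_filter, Finset.mem_univ, true_and] at *
  · exact he ▸ e.2
  · exact Subtype.ext (Prod.ext h (he₁.trans he₂.symm))
  · exact ⟨⟨(x, f.1.1), hx⟩, rfl, rfl⟩

theorem outdeg_lineDigraph (e : {e : V × V // G.Adj e.1 e.2}) :
    outdeg (lineDigraph G) e = outdeg G e.1.2 := by
  unfold outdeg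
  refine Finset.card_bij (fun f _ => f.1.2) (fun f hf => ?_) (fun f₁ hf₁ f₂ hf₂ h => ?_)
    (fun y hy => ?_) <;> simp only [Finset.mem_filter, Finset.mem_univ, true_and] at *
  · exact (show e.1.2 = f.1.1 from hf) ▸ f.2
  · exact Subtype.ext (Prod.ext (hf₁.symm.trans hf₂) h)
  · exact ⟨⟨(e.1.2, y), hy⟩, rfl, rfl⟩

end LineDigraph

def IsWalk.edges {V : Type u} {G : Digraph V} {k : ℕ} {w : Fin (k + 2) → V} (hw : IsWalk G w) :
    Fin (k + 1) → {e : V × V // G.Adj e.1 e.2} :=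
  fun i => ⟨(w i.castSucc, w i.succ), hw i⟩

theorem IsWalk.isWalk_edges {V : Type u} {G : Digraph V} {k : ℕ} {w : Fin (k + 2) → V}
    (hw : IsWalk G w) : IsWalk (lineDigraph G) hw.edges :=
  fun _ => rfl

/-- if `G` contains an `l₃₁`-interval of length `ℓ = m + 2 ≥ 2`,
then `L(G)` contains an `l₃₁`-interval of length `ℓ - 1 = m + 1`. -/
theorem l31_shrinks {V : Type u} [Fintype V] [DecidableEq V]
    (G : Digraph V) [DecidableRel G.Adj] {m : ℕ}
    (w : Fin (m + 3) → V) (h : IsL31 G (ℓ := m + 2) w) :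
    ∃ w' : Fin (m + 2) → {e : V × V // G.Adj e.1 e.2},
      IsL31 (lineDigraph G) (ℓ := m + 1) w' := by
  obtain ⟨hwalk, hin, hout, hmid⟩ := h
  refine ⟨hwalk.edges, hwalk.isWalk_edges, ?_, ?_, fun i hi₀ hi => ?_⟩
  · rwa [indeg_lineDigraph]
  · rwa [outdeg_lineDigraph]
  · rw [indeg_lineDigraph, outdeg_lineDigraph]
    exact ⟨(hmid i.castSucc hi₀ (by simp)).1, (hmid i.succ (by simp) (by simp; omega)).2⟩
end

section
/- Preservation of the holonomic class under one converting step: if a finite digraph G is canonical (every vertex simple) and contains no l₃₁-interval, then the line digraph L(G) is canonical and contains no l₃₁-interval. -/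
universe u

private lemma indeg_line {V : Type u} [Fintype V] [DecidableEq V]
    (G : Digraph V) [DecidableRel G.Adj] (e : {e : V × V // G.Adj e.1 e.2}) :
    indeg (lineDigraph G) e = indeg G e.1.1 := by
  unfold indeg
  refine Finset.card_bij' (fun f _ => f.1.1)
    (fun u hu => ⟨(u, e.1.1), by
      simpa using hu⟩) ?_ ?_ ?_ ?_
  · intro f hf
    simp only [Finset.mem_filter, Finset.mem_univ, true_and] at hf ⊢
    have h2 := f.2
    have h3 : f.1.2 = e.1.1 := hf
    rwa [h3] at h2
  · intro u hu
    simp only [Finset.mem_filter, Finset.mem_univ, true_and]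
    show (u, e.1.1).2 = e.1.1
    rfl
  · intro f hf
    simp only [Finset.mem_filter, Finset.mem_univ, true_and] at hf
    have h3 : f.1.2 = e.1.1 := hf
    exact Subtype.ext (Prod.ext rfl h3.symm)
  · intro u hu; rfl

private lemma outdeg_line {V : Type u} [Fintype V] [DecidableEq V]
    (G : Digraph V) [DecidableRel G.Adj] (e : {e : V × V // G.Adj e.1 e.2}) :
    outdeg (lineDigraph G) e = outdeg G e.1.2 := by
  unfold outdeg
  refine Finset.card_bij' (fun f _ => f.1.2)
    (fun u hu => ⟨(e.1.2, u), by
      simpa using hu⟩) ?_ ?_ ?_ ?_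
  · intro f hf
    simp only [Finset.mem_filter, Finset.mem_univ, true_and] at hf ⊢
    have h2 := f.2
    have h3 : e.1.2 = f.1.1 := hf
    rwa [← h3] at h2
  · intro u hu
    simp only [Finset.mem_filter, Finset.mem_univ, true_and]
    show e.1.2 = (e.1.2, u).1
    rfl
  · intro f hf
    simp only [Finset.mem_filter, Finset.mem_univ, true_and] at hf
    have h3 : e.1.2 = f.1.1 := hf
    exact Subtype.ext (Prod.ext h3 rfl)
  · intro u hu; rfl

private lemma outdeg_pos {V : Type u} [Fintype V] [DecidableEq V]
    (G : Digraph V) [DecidableRel G.Adj] {a b : V} (h : G.Adj a b) :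
    1 ≤ outdeg G a :=
  Finset.card_pos.mpr ⟨b, by simp [h]⟩

private lemma indeg_pos {V : Type u} [Fintype V] [DecidableEq V]
    (G : Digraph V) [DecidableRel G.Adj] {a b : V} (h : G.Adj a b) :
    1 ≤ indeg G b :=
  Finset.card_pos.mpr ⟨a, by simp [h]⟩

/-- if `G` is canonical and contains no `l₃₁`-interval, then `L(G)`
is canonical and contains no `l₃₁`-interval. -/
theorem holonomic_class_preserved {V : Type u} [Fintype V] [DecidableEq V]
    (G : Digraph V) [DecidableRel G.Adj]
    (hcan : ∀ v : V, indeg G v ≤ 1 ∨ outdeg G v ≤ 1)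
    (hno : ¬ ∃ (m : ℕ) (w : Fin (m + 2) → V), IsL31 G (ℓ := m + 1) w) :
    (∀ e : {e : V × V // G.Adj e.1 e.2},
      indeg (lineDigraph G) e ≤ 1 ∨ outdeg (lineDigraph G) e ≤ 1) ∧
    ¬ ∃ (m : ℕ) (w' : Fin (m + 2) → {e : V × V // G.Adj e.1 e.2}),
      IsL31 (lineDigraph G) (ℓ := m + 1) w' := by
  -- no l31 of length 1
  have hone : ∀ u v : V, G.Adj u v → 2 ≤ indeg G u → 2 ≤ outdeg G v → False := by
    intro u v hadj hu hv
    apply hno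
    refine ⟨0, ![u, v], ?_, ?_, ?_, ?_⟩
    · intro i; fin_cases i; simpa using hadj
    · simpa using hu
    · simpa using hv
    · intro i h1 h2; omega
  refine ⟨?_, ?_⟩
  · intro e
    by_contra h
    push_neg at h
    rw [indeg_line] at h
    rw [outdeg_line] at h
    exact hone e.1.1 e.1.2 e.2 h.1 h.2
  · rintro ⟨m, w', hwalk, hin, hout, hint⟩
    rw [indeg_line] at hin
    rw [outdeg_line] at hout
    have consec : ∀ (j : ℕ) (h : j < m + 1),
        (w' ⟨j, by omega⟩).1.2 = (w' ⟨j + 1, by omega⟩).1.1 :=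
      fun j h => hwalk ⟨j, h⟩
    have hintg : ∀ (j : ℕ) (h1 : 0 < j) (h2 : j < m + 1),
        indeg G (w' ⟨j, by omega⟩).1.1 = 1 ∧ outdeg G (w' ⟨j, by omega⟩).1.2 = 1 := by
      intro j h1 h2
      have := hint ⟨j, by omega⟩ h1 h2
      rwa [indeg_line, outdeg_line] at this
    -- special endpoint facts
    have hA : outdeg G (w' 0).1.2 = 1 := by
      have hle : outdeg G (w' 0).1.2 ≤ 1 := by
        by_contra h
        exact hone (w' 0).1.1 (w' 0).1.2 (w' 0).2 hin (by omega)
      have h0 : (0 : Fin (m + 2)) = ⟨0, by omega⟩ := by ext; simp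
      have hge : 1 ≤ outdeg G (w' 0).1.2 := by
        rw [h0, consec 0 (by omega)]
        exact outdeg_pos G (w' ⟨1, by omega⟩).2
      omega
    have hB : indeg G (w' (Fin.last (m + 1))).1.1 = 1 := by
      have hle : indeg G (w' (Fin.last (m + 1))).1.1 ≤ 1 := by
        by_contra h
        exact hone (w' (Fin.last (m + 1))).1.1 (w' (Fin.last (m + 1))).1.2
          (w' (Fin.last (m + 1))).2 (by omega) hout
      have hlast : (Fin.last (m + 1)) = ⟨m + 1, by omega⟩ := rfl
      have hge : 1 ≤ indeg G (w' (Fin.last (m + 1))).1.1 := by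
        rw [hlast, ← consec m (by omega)]
        exact indeg_pos G (w' ⟨m, by omega⟩).2
      omega
    apply hno
    set v : Fin (m + 3) → V := fun i =>
      dite ((i : ℕ) < m + 2) (fun h => (w' ⟨i, h⟩).1.1)
        (fun _ => (w' (Fin.last (m + 1))).1.2) with hv
    have hv1 : ∀ (j : ℕ) (h : j < m + 2) (h' : j < m + 3),
        v ⟨j, h'⟩ = (w' ⟨j, h⟩).1.1 := by
      intro j h h'
      rw [hv]
      exact dif_pos h
    have hv2 : v (Fin.last (m + 2)) = (w' (Fin.last (m + 1))).1.2 := by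
      rw [hv]
      exact dif_neg (by simp)
    refine ⟨m + 1, v, ?_, ?_, ?_, ?_⟩
    · intro i
      have e1 : v i.castSucc = (w' i).1.1 := hv1 i.val i.isLt (by omega)
      by_cases hc : (i : ℕ) + 1 < m + 2
      · have e2 : v i.succ = (w' ⟨(i : ℕ) + 1, hc⟩).1.1 := hv1 ((i : ℕ) + 1) hc (by omega)
        have e3 : v i.succ = (w' i).1.2 := e2.trans (consec i.val (by omega)).symm
        rw [e1, e3]
        exact (w' i).2
      · have hi : (i : ℕ) = m + 1 := by omega
        have hsucc : i.succ = Fin.last (m + 2) := by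
          ext; simp [hi]
        have hieq : i = Fin.last (m + 1) := by
          ext; simp [hi]
        rw [e1, hsucc, hv2, hieq]
        exact (w' (Fin.last (m + 1))).2
    · have h0 : (0 : Fin (m + 3)) = ⟨0, by omega⟩ := by ext; simp
      have h0' : (0 : Fin (m + 2)) = ⟨0, by omega⟩ := by ext; simp
      rw [h0, hv1 0 (by omega) (by omega), ← h0']
      exact hin
    · rw [hv2]
      exact hout
    · intro i h1 h2
      have e1 : v i = (w' ⟨(i : ℕ), h2⟩).1.1 := hv1 (i : ℕ) h2 i.isLt
      rw [e1]
      constructor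
      · -- indegree
        by_cases hc : (i : ℕ) < m + 1
        · exact (hintg (i : ℕ) h1 hc).1
        · have hi : (i : ℕ) = m + 1 := by omega
          have : (⟨(i : ℕ), h2⟩ : Fin (m + 2)) = Fin.last (m + 1) := by ext; simp [hi]
          rw [this]
          exact hB
      · -- outdegree: v i = (w' (i-1)).1.2
        obtain ⟨j, hj⟩ : ∃ j, (i : ℕ) = j + 1 := ⟨(i : ℕ) - 1, by omega⟩
        have hj2 : j + 1 < m + 2 := by omega
        have emk : (⟨(i : ℕ), h2⟩ : Fin (m + 2)) = ⟨j + 1, hj2⟩ := by ext; simp [hj]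
        have e4 : (w' ⟨j + 1, hj2⟩).1.1 = (w' ⟨j, by omega⟩).1.2 := (consec j (by omega)).symm
        rw [emk, e4]
        by_cases hc : 0 < j
        · exact (hintg j hc (by omega)).2
        · have hj : j = 0 := by omega
          subst hj
          have h0' : (⟨0, by omega⟩ : Fin (m + 2)) = 0 := by ext; simp
          rw [h0']
          exact hA
end

section
/- Theorem 12 (characterization of holonomic graphs): let G be a canonical finite digraph. Then every directed walk in G is holonomic if and only if G contains no l₃₁-interval and no contour (no directed cycle possessing both an entry edge and an exit edge). Moreover, in a canonical digraph any directed cycle possessing both an entry edge and an exit edge gives rise to an l₃₁-interval, so the two forbidden configurations are equivalent. -/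
universe u

section Aux

variable {V : Type u} [Fintype V] (G : Digraph V) [DecidableRel G.Adj]

lemma aux_one_le_indeg {u v : V} (h : G.Adj u v) : 1 ≤ indeg G v :=
  Finset.card_pos.2 ⟨u, Finset.mem_filter.2 ⟨Finset.mem_univ _, h⟩⟩

lemma aux_one_le_outdeg {u v : V} (h : G.Adj u v) : 1 ≤ outdeg G u :=
  Finset.card_pos.2 ⟨v, Finset.mem_filter.2 ⟨Finset.mem_univ _, h⟩⟩

lemma aux_two_le_indeg {u₁ u₂ v : V} (h₁ : G.Adj u₁ v) (h₂ : G.Adj u₂ v) (hne : u₁ ≠ u₂) :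
    2 ≤ indeg G v :=
  Finset.one_lt_card.2 ⟨u₁, Finset.mem_filter.2 ⟨Finset.mem_univ _, h₁⟩,
    u₂, Finset.mem_filter.2 ⟨Finset.mem_univ _, h₂⟩, hne⟩

lemma aux_two_le_outdeg {u v₁ v₂ : V} (h₁ : G.Adj u v₁) (h₂ : G.Adj u v₂) (hne : v₁ ≠ v₂) :
    2 ≤ outdeg G u :=
  Finset.one_lt_card.2 ⟨v₁, Finset.mem_filter.2 ⟨Finset.mem_univ _, h₁⟩,
    v₂, Finset.mem_filter.2 ⟨Finset.mem_univ _, h₂⟩, hne⟩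

/-- Core lemma: a non-holonomic walk (given as a function on ℕ) yields an `l₃₁`-interval. -/
lemma aux_core (f : ℕ → V) (N : ℕ) (hf : ∀ n, n < N → G.Adj (f n) (f (n + 1)))
    (i j : ℕ) (hij : i < j) (hjN : j ≤ N)
    (hi2 : 2 ≤ indeg G (f i)) (hj2 : 2 ≤ outdeg G (f j)) :
    ∃ (m : ℕ) (w : Fin (m + 2) → V), IsL31 G (ℓ := m + 1) w := by
  classical
  let P : ℕ → Prop := fun d => ∃ a b : ℕ, a < b ∧ b ≤ N ∧ b - a = d ∧
    2 ≤ indeg G (f a) ∧ 2 ≤ outdeg G (f b)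
  have hP : ∃ d, P d := ⟨j - i, i, j, hij, hjN, rfl, hi2, hj2⟩
  obtain ⟨a, b, hab, hbN, hd, ha2, hb2⟩ := Nat.find_spec hP
  have hmin : ∀ d', d' < Nat.find hP → ¬ P d' := fun d' h => Nat.find_min hP h
  set d := Nat.find hP with hdd
  obtain ⟨m, hm⟩ : ∃ m, d = m + 1 := ⟨d - 1, by omega⟩
  have hbam : b = a + (m + 1) := by omega
  refine ⟨m, fun t => f (a + (t : ℕ)), ?_, ?_, ?_, ?_⟩
  · intro t
    have h1 : ((t.castSucc : Fin (m + 2)) : ℕ) = (t : ℕ) := rfl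
    have h2 : ((t.succ : Fin (m + 2)) : ℕ) = (t : ℕ) + 1 := rfl
    simp only [h1, h2]
    have h3 : a + ((t : ℕ) + 1) = (a + (t : ℕ)) + 1 := by omega
    rw [h3]
    have ht := t.isLt
    exact hf _ (by omega)
  · simpa using ha2
  · have h4 : a + ((Fin.last (m + 1) : Fin (m + 2)) : ℕ) = b := by
      simp; omega
    show 2 ≤ outdeg G (f (a + ((Fin.last (m + 1) : Fin (m + 2)) : ℕ)))
    rw [h4]; exact hb2
  · intro t ht0 htl
    have hin1 : 1 ≤ indeg G (f (a + (t : ℕ))) := by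
      have e := hf (a + (t : ℕ) - 1) (by omega)
      have h5 : a + (t : ℕ) - 1 + 1 = a + (t : ℕ) := by omega
      rw [h5] at e
      exact aux_one_le_indeg G e
    have hout1 : 1 ≤ outdeg G (f (a + (t : ℕ))) := by
      have e := hf (a + (t : ℕ)) (by omega)
      exact aux_one_le_outdeg G e
    have hinle : indeg G (f (a + (t : ℕ))) ≤ 1 := by
      by_contra h
      exact hmin (b - (a + (t : ℕ))) (by omega)
        ⟨a + (t : ℕ), b, by omega, hbN, rfl, by omega, hb2⟩
    have houtle : outdeg G (f (a + (t : ℕ))) ≤ 1 := by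
      by_contra h
      exact hmin ((a + (t : ℕ)) - a) (by omega)
        ⟨a, a + (t : ℕ), by omega, by omega, rfl, ha2, by omega⟩
    exact ⟨le_antisymm hinle hin1, le_antisymm houtle hout1⟩

/-- A contour in a canonical digraph gives rise to an `l₃₁`-interval. -/
lemma aux_contour (hcan : ∀ v : V, indeg G v ≤ 1 ∨ outdeg G v ≤ 1) (hc : HasContour G) :
    ∃ (m : ℕ) (w : Fin (m + 2) → V), IsL31 G (ℓ := m + 1) w := by
  obtain ⟨k, w, ⟨hw, hcl, hinj⟩, ⟨a, b, hab, ⟨i₀, hi₀⟩, hnotin⟩,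
    ⟨a', b', hab', ⟨j₀, hj₀⟩, hnotout⟩⟩ := hc
  -- the periodic extension of the cycle
  set f : ℕ → V := fun n => w ⟨n % (k + 1), Nat.lt_succ_of_lt (Nat.mod_lt n (Nat.succ_pos k))⟩
    with hfdef
  have hf : ∀ n, G.Adj (f n) (f (n + 1)) := by
    intro n
    have hr : n % (k + 1) < k + 1 := Nat.mod_lt n (Nat.succ_pos k)
    have hmod : (n + 1) % (k + 1) = (n % (k + 1) + 1) % (k + 1) := by
      conv_lhs => rw [show n + 1 = (k + 1) * (n / (k + 1)) + (n % (k + 1) + 1) by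
        have := Nat.div_add_mod n (k + 1); omega]
      rw [Nat.mul_add_mod]
    have he := hw ⟨n % (k + 1), hr⟩
    have hcs : ((⟨n % (k + 1), hr⟩ : Fin (k + 1)).castSucc : Fin (k + 2)) =
        ⟨n % (k + 1), Nat.lt_succ_of_lt hr⟩ := by ext; simp
    have hsc : ((⟨n % (k + 1), hr⟩ : Fin (k + 1)).succ : Fin (k + 2)) =
        ⟨n % (k + 1) + 1, by omega⟩ := by ext; simp
    rw [hcs, hsc] at he
    show G.Adj (w ⟨n % (k + 1), _⟩) (w ⟨(n + 1) % (k + 1), _⟩)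
    rcases Nat.lt_or_ge (n % (k + 1)) k with hlt | hge
    · have h6 : (n + 1) % (k + 1) = n % (k + 1) + 1 := by
        rw [hmod, Nat.mod_eq_of_lt (by omega)]
      convert he using 2
      exact Fin.ext h6
    · have hk : n % (k + 1) = k := by omega
      have h6 : (n + 1) % (k + 1) = 0 := by
        rw [hmod, hk, Nat.mod_self]
      have h7 : (⟨(n + 1) % (k + 1), Nat.lt_succ_of_lt (Nat.mod_lt (n+1) (Nat.succ_pos k))⟩ :
          Fin (k + 2)) = (0 : Fin (k + 2)) := by ext; simp [h6]
      rw [h7, hcl]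
      have h8 : (Fin.last (k + 1) : Fin (k + 2)) = ⟨n % (k + 1) + 1, by omega⟩ := by
        ext; simp [hk]
      rw [h8]
      convert he using 2
  -- representative index of b on the cycle
  obtain ⟨i, hik, hfi⟩ : ∃ i : ℕ, i < k + 1 ∧ f i = b := by
    rcases Nat.lt_or_ge (i₀ : ℕ) (k + 1) with h | h
    · refine ⟨(i₀ : ℕ), h, ?_⟩
      show w ⟨(i₀ : ℕ) % (k + 1), _⟩ = b
      rw [← hi₀]; congr 1; ext; simp [Nat.mod_eq_of_lt h]
    · refine ⟨0, Nat.succ_pos k, ?_⟩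
      have hi0 := i₀.isLt
      have hlast : i₀ = Fin.last (k + 1) := by ext; simp [Fin.last]; omega
      show w ⟨0 % (k + 1), _⟩ = b
      rw [← hi₀, hlast]
      have : (⟨0 % (k + 1), Nat.lt_succ_of_lt (Nat.mod_lt 0 (Nat.succ_pos k))⟩ :
          Fin (k + 2)) = (0 : Fin (k + 2)) := by ext; simp
      rw [this, hcl]
  -- representative index of a' on the cycle
  obtain ⟨j, hjk, hfj⟩ : ∃ j : ℕ, j < k + 1 ∧ f j = a' := by
    rcases Nat.lt_or_ge (j₀ : ℕ) (k + 1) with h | h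
    · refine ⟨(j₀ : ℕ), h, ?_⟩
      show w ⟨(j₀ : ℕ) % (k + 1), _⟩ = a'
      rw [← hj₀]; congr 1; ext; simp [Nat.mod_eq_of_lt h]
    · refine ⟨0, Nat.succ_pos k, ?_⟩
      have hj0 := j₀.isLt
      have hlast : j₀ = Fin.last (k + 1) := by ext; simp [Fin.last]; omega
      show w ⟨0 % (k + 1), _⟩ = a'
      rw [← hj₀, hlast]
      have : (⟨0 % (k + 1), Nat.lt_succ_of_lt (Nat.mod_lt 0 (Nat.succ_pos k))⟩ :
          Fin (k + 2)) = (0 : Fin (k + 2)) := by ext; simp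
      rw [this, hcl]
  -- b is convergent
  have hb2 : 2 ≤ indeg G b := by
    obtain ⟨p, hps⟩ : ∃ p : Fin (k + 1), w p.succ = b := by
      rcases Nat.eq_zero_or_pos i with h0 | hpos
      · refine ⟨Fin.last k, ?_⟩
        have h9 : (Fin.last k).succ = Fin.last (k + 1) := by ext; simp
        rw [h9, ← hcl, ← hfi]
        subst h0
        show w 0 = w ⟨0 % (k + 1), _⟩
        congr 1
      · refine ⟨⟨i - 1, by omega⟩, ?_⟩
        have h9 : ((⟨i - 1, by omega⟩ : Fin (k + 1)).succ : Fin (k + 2)) = ⟨i, by omega⟩ := by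
          ext; simp; omega
        rw [h9, ← hfi]
        show w _ = w ⟨i % (k + 1), _⟩
        congr 1; ext; simp [Nat.mod_eq_of_lt hik]
    have he := hw p
    rw [hps] at he
    have hne : w p.castSucc ≠ a := by
      intro h
      exact hnotin ⟨p, h, hps⟩
    exact aux_two_le_indeg G hab he (Ne.symm hne)
  -- a' is divergent
  have ha2 : 2 ≤ outdeg G a' := by
    have hcs : ((⟨j, hjk⟩ : Fin (k + 1)).castSucc : Fin (k + 2)) = ⟨j, by omega⟩ := by
      ext; simp
    have hwj : w ((⟨j, hjk⟩ : Fin (k + 1)).castSucc) = a' := by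
      rw [hcs, ← hfj]
      show w _ = w ⟨j % (k + 1), _⟩
      congr 1; ext; simp [Nat.mod_eq_of_lt hjk]
    have he := hw ⟨j, hjk⟩
    rw [hwj] at he
    have hne : w (⟨j, hjk⟩ : Fin (k + 1)).succ ≠ b' := by
      intro h
      exact hnotout ⟨⟨j, hjk⟩, hwj, h⟩
    exact aux_two_le_outdeg G he hab' hne
  -- b ≠ a', hence the representatives differ
  have hba : b ≠ a' := by
    intro h
    rcases hcan b with h1 | h1
    · omega
    · rw [h] at h1; omega
  have hijne : i ≠ j := by
    intro h
    rw [h, hfj] at hfi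
    exact hba hfi.symm
  -- the distance from b to a' along the cycle
  set ℓ : ℕ := (j + (k + 1) - i) % (k + 1) with hldef
  have hl1 : 1 ≤ ℓ := by
    have hlk : ℓ < k + 1 := Nat.mod_lt _ (Nat.succ_pos k)
    rcases Nat.eq_zero_or_pos ℓ with h0 | h
    · exfalso
      obtain ⟨c, hc⟩ := Nat.dvd_of_mod_eq_zero (hldef ▸ h0)
      match c, hc with
      | 0, hc => omega
      | 1, hc => omega
      | (c + 2), hc =>
        have h10 : (k + 1) * 2 ≤ (k + 1) * (c + 2) := Nat.mul_le_mul_left _ (by omega)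
        omega
    · exact h
  have hflj : f (i + ℓ) = f j := by
    show w ⟨(i + ℓ) % (k + 1), _⟩ = w ⟨j % (k + 1), _⟩
    congr 1
    ext
    simp only
    rw [hldef, Nat.add_mod_mod, show i + (j + (k + 1) - i) = j + (k + 1) by omega,
      Nat.add_mod_right]
  exact aux_core G f (i + ℓ) (fun n _ => hf n) i (i + ℓ) (by omega) (le_refl _)
    (by rw [hfi]; exact hb2) (by rw [hflj, hfj]; exact ha2)

end Aux

/-- Theorem 12: for a canonical finite digraph `G`, every directed
walk in `G` is holonomic iff `G` contains no `l₃₁`-interval and no contour;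
moreover in a canonical digraph any contour gives rise to an `l₃₁`-interval. -/
theorem holonomic_iff_no_l31_no_contour {V : Type u} [Fintype V]
    (G : Digraph V) [DecidableRel G.Adj]
    (hcan : ∀ v : V, indeg G v ≤ 1 ∨ outdeg G v ≤ 1) :
    ((∀ (k : ℕ) (w : Fin (k + 1) → V), IsWalk G w →
        ¬ ∃ i j : Fin (k + 1), i < j ∧
          2 ≤ indeg G (w i) ∧ 2 ≤ outdeg G (w j)) ↔
      ((¬ ∃ (m : ℕ) (w : Fin (m + 2) → V), IsL31 G (ℓ := m + 1) w) ∧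
        ¬ HasContour G)) ∧
    (HasContour G → ∃ (m : ℕ) (w : Fin (m + 2) → V), IsL31 G (ℓ := m + 1) w) := by
  have l31walk : (∃ (m : ℕ) (w : Fin (m + 2) → V), IsL31 G (ℓ := m + 1) w) →
      ∃ (k : ℕ) (w : Fin (k + 1) → V), IsWalk G w ∧
        ∃ i j : Fin (k + 1), i < j ∧ 2 ≤ indeg G (w i) ∧ 2 ≤ outdeg G (w j) := by
    rintro ⟨m, w, hwk, hi, hj, -⟩
    exact ⟨m + 1, w, hwk, 0, Fin.last (m + 1),
      by rw [Fin.lt_def]; simp, hi, hj⟩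
  constructor
  · constructor
    · intro hhol
      constructor
      · intro hl
        obtain ⟨k, w, hwk, i, j, hij, hi, hj⟩ := l31walk hl
        exact hhol k w hwk ⟨i, j, hij, hi, hj⟩
      · intro hc
        obtain ⟨k, w, hwk, i, j, hij, hi, hj⟩ := l31walk (aux_contour G hcan hc)
        exact hhol k w hwk ⟨i, j, hij, hi, hj⟩
    · rintro ⟨hno, -⟩ k w hw ⟨i, j, hij, hi, hj⟩
      apply hno
      set f : ℕ → V := fun n => w ⟨min n k, by omega⟩ with hfdef
      have hf : ∀ n, n < k → G.Adj (f n) (f (n + 1)) := by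
        intro n hn
        have e := hw ⟨n, hn⟩
        have c1 : ((⟨n, hn⟩ : Fin k).castSucc : Fin (k + 1)) = ⟨min n k, by omega⟩ := by
          ext; simp; omega
        have c2 : ((⟨n, hn⟩ : Fin k).succ : Fin (k + 1)) = ⟨min (n + 1) k, by omega⟩ := by
          ext; simp; omega
        rw [c1, c2] at e
        exact e
      have hvi : f (i : ℕ) = w i := by
        have := i.isLt
        show w _ = w i
        congr 1; ext; simp; omega
      have hvj : f (j : ℕ) = w j := by
        have := j.isLt
        show w _ = w j
        congr 1; ext; simp; omega
      exact aux_core G f k hf (i : ℕ) (j : ℕ) hij (Nat.lt_succ_iff.mp j.isLt)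
        (by rw [hvi]; exact hi) (by rw [hvj]; exact hj)
  · exact aux_contour G hcan
end
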